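/- arXiv:1611.04045 — 6 statements merged into one kernel-verified Lean document; each statement's English description precedes it below -/
import Mathlib

section
/- Basic mean value inequality: Let X be a real topological vector space (or a normed space), f : X → (-∞,+∞] lower semicontinuous, x ∈ dom f, x̄ ∈ X, and let λ be a real number with λ ≤ f(x̄) − f(x) (interpreting f(x̄) = +∞ as making the inequality hold for all λ). Then there exist t₀ ∈ [0,1) and the point x₀ := x + t₀(x̄ − x) ∈ [x, x̄) such that f(x₀) ≤ f(x) + t₀·λ and λ ≤ f^r(x₀; x̄ − x). -/
open Filter Topology

/-- Lower radial subderivative `f^r(x;u)`. -/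
noncomputable def radial {X : Type*} [NormedAddCommGroup X] [NormedSpace ℝ X]
    (f : X → EReal) (x u : X) : EReal :=
  Filter.liminf (fun t : ℝ => ((t⁻¹ : ℝ) : EReal) * (f (x + t • u) - f x)) (𝓝[>] (0:ℝ))

/-- Upper radial subderivative `f^r_+(x;u)`. -/
noncomputable def radialPlus {X : Type*} [NormedAddCommGroup X] [NormedSpace ℝ X]
    (f : X → EReal) (x u : X) : EReal :=
  Filter.limsup (fun t : ℝ => ((t⁻¹ : ℝ) : EReal) * (f (x + t • u) - f x)) (𝓝[>] (0:ℝ))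

/-! The function `t ↦ f (x + t • (x̄ - x)) - t λ` is lower semicontinuous on `[0, 1]` and, by the
choice of `λ`, no larger at `0` than at `1`; so it attains its minimum over `[0, 1]` at some
`t₀ < 1`. Comparing with `t = 0` gives the first inequality, comparing with `t₀ + t` for small
`t > 0` bounds the difference quotients defining `f^r` below by `λ`. -/

open Set

theorem LowerSemicontinuous.sub_coe {α : Type*} [TopologicalSpace α] {g : α → EReal}
    {φ : α → ℝ} (hg : LowerSemicontinuous g) (hφ : Continuous φ) :
    LowerSemicontinuous fun a => g a - (φ a : EReal) := by
  have hneg : Continuous fun a => -(φ a : EReal) := (continuous_coe_real_ereal.comp hφ).neg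
  refine hg.add' hneg.lowerSemicontinuous fun a => EReal.continuousAt_add (.inr ?_) (.inr ?_)
  · exact EReal.coe_neg (φ a) ▸ EReal.coe_ne_bot _
  · exact EReal.coe_neg (φ a) ▸ EReal.coe_ne_top _

theorem LowerSemicontinuousOn.exists_mem_Ico_isMinOn_Icc {β : Type*} [LinearOrder β]
    {g : ℝ → β} {a b : ℝ} (hg : LowerSemicontinuousOn g (Icc a b)) (hab : a < b)
    (hgab : g a ≤ g b) : ∃ t₀ ∈ Ico a b, IsMinOn g (Icc a b) t₀ := by
  obtain ⟨t, ht, hmin⟩ := hg.exists_isMinOn (nonempty_Icc.2 hab.le) isCompact_Icc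
  rcases ht.2.lt_or_eq with htb | rfl
  · exact ⟨t, ⟨ht.1, htb⟩, hmin⟩
  · exact ⟨a, left_mem_Ico.2 hab, fun s hs => hgab.trans (hmin hs)⟩

theorem le_radial_of_eventually_add_le {X : Type*} [NormedAddCommGroup X] [NormedSpace ℝ X]
    {f : X → EReal} {x u : X} {lam : ℝ} (hx : f x ≠ ⊤) (hx' : f x ≠ ⊥)
    (h : ∀ᶠ t in 𝓝[>] (0:ℝ), f x + ((t * lam : ℝ) : EReal) ≤ f (x + t • u)) :
    (lam : EReal) ≤ radial f x u := by
  unfold radial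
  lift f x to ℝ using ⟨hx, hx'⟩ with r
  refine le_liminf_of_le (by isBoundedDefault) ?_
  filter_upwards [h, self_mem_nhdsWithin] with t hle (ht : 0 < t)
  have hdiff : ((t * lam : ℝ) : EReal) ≤ f (x + t • u) - r := by
    rwa [EReal.le_sub_iff_add_le (.inl (EReal.coe_ne_bot r)) (.inl (EReal.coe_ne_top r)),
      add_comm]
  calc (lam : EReal) = ((t⁻¹ : ℝ) : EReal) * ((t * lam : ℝ) : EReal) := by
        rw [← EReal.coe_mul, inv_mul_cancel_left₀ ht.ne']
    _ ≤ ((t⁻¹ : ℝ) : EReal) * (f (x + t • u) - r) :=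
        mul_le_mul_of_nonneg_left hdiff (EReal.coe_nonneg.2 (inv_nonneg.2 ht.le))

/-- Basic mean value inequality (Lemma: basic mean value inequality). -/
theorem basic_mean_value_inequality {X : Type*} [NormedAddCommGroup X] [NormedSpace ℝ X]
    (f : X → EReal) (hf : LowerSemicontinuous f) (hbot : ∀ y, f y ≠ ⊥)
    (x : X) (hx : f x ≠ ⊤) (xbar : X) (lam : ℝ) (hlam : (lam : EReal) ≤ f xbar - f x) :
    ∃ t₀ ∈ Set.Ico (0:ℝ) 1,
      f (x + t₀ • (xbar - x)) ≤ f x + ((t₀ * lam : ℝ) : EReal) ∧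
      (lam : EReal) ≤ radial f (x + t₀ • (xbar - x)) (xbar - x) := by
  set u := xbar - x
  set g : ℝ → EReal := fun t => f (x + t • u) - ((t * lam : ℝ) : EReal)
  have hg : LowerSemicontinuous g := (hf.comp (by fun_prop)).sub_coe (by fun_prop)
  have hg01 : g 0 ≤ g 1 := by
    have hg1 : g 1 = f xbar - (lam : EReal) := by simp [g, u]
    rw [hg1, EReal.le_sub_iff_add_le (.inl (EReal.coe_ne_bot lam)) (.inl (EReal.coe_ne_top lam))]
    simpa [g, add_comm] using
      (EReal.le_sub_iff_add_le (.inl (hbot x)) (.inl hx)).1 hlam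
  obtain ⟨t₀, ht₀, hmin⟩ := (hg.lowerSemicontinuousOn _).exists_mem_Ico_isMinOn_Icc one_pos hg01
  have hfx₀ : f (x + t₀ • u) ≤ f x + ((t₀ * lam : ℝ) : EReal) :=
    calc f (x + t₀ • u) = g t₀ + ((t₀ * lam : ℝ) : EReal) := EReal.sub_add_cancel.symm
      _ ≤ g 0 + ((t₀ * lam : ℝ) : EReal) := by gcongr; exact hmin ⟨le_rfl, zero_le_one⟩
      _ = f x + ((t₀ * lam : ℝ) : EReal) := by simp [g]
  refine ⟨t₀, ht₀, hfx₀, le_radial_of_eventually_add_le ?_ (hbot _) ?_⟩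
  · exact (hfx₀.trans_lt (EReal.add_lt_top hx (EReal.coe_ne_top _))).ne
  · filter_upwards [Ioc_mem_nhdsGT (sub_pos.2 ht₀.2)] with t ht
    calc f (x + t₀ • u) + ((t * lam : ℝ) : EReal)
        = g t₀ + (((t₀ + t) * lam : ℝ) : EReal) := by
          simp only [g, add_mul, EReal.coe_add, ← add_assoc, EReal.sub_add_cancel]
      _ ≤ g (t₀ + t) + (((t₀ + t) * lam : ℝ) : EReal) := by
          gcongr; exact hmin ⟨by linarith [ht₀.1, ht.1], by linarith [ht.2]⟩
      _ = f (x + t₀ • u + t • u) := by rw [EReal.sub_add_cancel, add_smul, add_assoc]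
end

section
/- Radial subderivative formula for convex lsc functions: Let X be a Banach space, f : X → (-∞,+∞] convex lower semicontinuous, x̄ ∈ dom f and u ∈ X. Then f^r(x̄;u) = inf_{α≥0} limsup_{x→x̄} f^r(x; u + α(x̄ − x)), where the limsup is over x → x̄ in norm. -/
open Filter Topology

private lemma limsup_pure' {β : Type*} (u : β → EReal) (a : β) :
    Filter.limsup u (pure a) = u a := by
  rw [Filter.limsup_eq]
  simp only [eventually_pure]
  exact csInf_Ici

/-- Key convexity bound: the radial derivative in direction `t⁻¹ • (z - x)` is bounded
by the difference quotient at `z`. -/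
private lemma key_bound {X : Type*} [NormedAddCommGroup X] [NormedSpace ℝ X]
    (f : X → EReal)
    (hconv : ∀ x y : X, ∀ t : ℝ, 0 ≤ t → t ≤ 1 →
      f ((1 - t) • x + t • y) ≤ (((1 - t : ℝ)) : EReal) * f x + ((t : ℝ) : EReal) * f y)
    (x z : X) (t : ℝ) (ht : 0 < t) (rx rz : ℝ) (hx : f x = (rx : EReal))
    (hz : f z = (rz : EReal)) :
    radial f x (t⁻¹ • (z - x)) ≤ ((t⁻¹ : ℝ) : EReal) * (f z - f x) := by
  apply Filter.liminf_le_of_frequently_le'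
  apply Filter.Eventually.frequently
  filter_upwards [Ioo_mem_nhdsGT_of_mem (Set.left_mem_Ico.2 ht)] with s hs
  obtain ⟨hs0, hst⟩ := hs
  set τ : ℝ := s / t with hτdef
  have hτ0 : 0 ≤ τ := div_nonneg hs0.le ht.le
  have hτ1 : τ ≤ 1 := by
    rw [div_le_one ht]; exact hst.le
  have hvec : x + s • (t⁻¹ • (z - x)) = (1 - τ) • x + τ • z := by
    have h1 : s • (t⁻¹ • (z - x)) = τ • (z - x) := by
      rw [smul_smul, hτdef, div_eq_mul_inv]
    rw [h1]; module
  have hcv := hconv x z τ hτ0 hτ1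
  rw [← hvec, hx, hz] at hcv
  have hcv' : f (x + s • (t⁻¹ • (z - x))) ≤ (((1 - τ) * rx + τ * rz : ℝ) : EReal) := by
    rw [EReal.coe_add, EReal.coe_mul, EReal.coe_mul]; exact hcv
  have h1 : f (x + s • (t⁻¹ • (z - x))) - f x
      ≤ (((1 - τ) * rx + τ * rz - rx : ℝ) : EReal) := by
    rw [EReal.coe_sub, hx]
    exact EReal.sub_le_sub hcv' le_rfl
  have h2 : ((s⁻¹ : ℝ) : EReal) * (f (x + s • (t⁻¹ • (z - x))) - f x)
      ≤ ((s⁻¹ * ((1 - τ) * rx + τ * rz - rx) : ℝ) : EReal) := by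
    rw [EReal.coe_mul]
    exact mul_le_mul_of_nonneg_left h1 (by exact_mod_cast inv_nonneg.2 hs0.le)
  refine h2.trans_eq ?_
  rw [hz, hx, ← EReal.coe_sub, ← EReal.coe_mul]
  norm_cast
  rw [hτdef]
  field_simp
  ring

theorem convex_radial_duality_formula {X : Type*} [NormedAddCommGroup X] [NormedSpace ℝ X]
    [CompleteSpace X]
    (f : X → EReal) (hf : LowerSemicontinuous f) (hbot : ∀ y, f y ≠ ⊥)
    (hconv : ∀ x y : X, ∀ t : ℝ, 0 ≤ t → t ≤ 1 →
      f ((1 - t) • x + t • y) ≤ (((1 - t : ℝ)) : EReal) * f x + ((t : ℝ) : EReal) * f y)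
    (xbar : X) (hxbar : f xbar ≠ ⊤) (u : X) :
    radial f xbar u =
      ⨅ α : {a : ℝ // 0 ≤ a},
        Filter.limsup
          (fun x => if f x = ⊤ then (⊥ : EReal)
            else radial f x (u + (α : ℝ) • (xbar - x))) (𝓝 xbar) := by
  obtain ⟨rb, hrb⟩ : ∃ r : ℝ, f xbar = (r : EReal) := by
    lift f xbar to ℝ using ⟨hxbar, hbot xbar⟩ with r
    exact ⟨r, rfl⟩
  apply le_antisymm
  · -- radial ≤ iInf : evaluate each limsup at xbar
    refine le_iInf fun α => ?_
    have h1 : Filter.limsup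
        (fun x => if f x = ⊤ then (⊥ : EReal)
          else radial f x (u + (α : ℝ) • (xbar - x))) (pure xbar) ≤
        Filter.limsup
        (fun x => if f x = ⊤ then (⊥ : EReal)
          else radial f x (u + (α : ℝ) • (xbar - x))) (𝓝 xbar) :=
      Filter.limsup_le_limsup_of_le (pure_le_nhds xbar)
    refine le_trans ?_ h1
    rw [limsup_pure']
    simp [hxbar]
  · -- iInf ≤ radial
    set L := ⨅ α : {a : ℝ // 0 ≤ a},
        Filter.limsup
          (fun x => if f x = ⊤ then (⊥ : EReal)
            else radial f x (u + (α : ℝ) • (xbar - x))) (𝓝 xbar) with hL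
    refine Filter.le_liminf_of_le (by isBoundedDefault) ?_
    filter_upwards [self_mem_nhdsWithin] with t (ht : 0 < t)
    set z := xbar + t • u with hz
    by_cases hA : f z = ⊤
    · rw [hz] at hA ⊢
      rw [hA, hrb, EReal.top_sub_coe, EReal.coe_mul_top_of_pos (inv_pos.2 ht)]
      exact le_top
    · obtain ⟨ra, hra⟩ : ∃ r : ℝ, f z = (r : EReal) := by
        lift f z to ℝ using ⟨hA, hbot z⟩ with r
        exact ⟨r, rfl⟩
      have hαnn : (0:ℝ) ≤ t⁻¹ := (inv_pos.2 ht).le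
      have hle : L ≤ Filter.limsup
          (fun x => if f x = ⊤ then (⊥ : EReal)
            else radial f x (u + (t⁻¹ : ℝ) • (xbar - x))) (𝓝 xbar) :=
        iInf_le _ (⟨t⁻¹, hαnn⟩ : {a : ℝ // 0 ≤ a})
      -- bound the limsup
      have hbound : ∀ y0 : ℝ, y0 < rb → Filter.limsup
          (fun x => if f x = ⊤ then (⊥ : EReal)
            else radial f x (u + (t⁻¹ : ℝ) • (xbar - x))) (𝓝 xbar)
          ≤ ((t⁻¹ * (ra - y0) : ℝ) : EReal) := by
        intro y0 hy0
        refine Filter.limsup_le_of_le (by isBoundedDefault) ?_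
        have hev : ∀ᶠ x in 𝓝 xbar, ((y0 : EReal) < f x) := by
          apply hf xbar
          rw [hrb]; exact_mod_cast hy0
        filter_upwards [hev] with x hx
        by_cases hxt : f x = ⊤
        · simp [hxt]
        · obtain ⟨rxx, hrxx⟩ : ∃ r : ℝ, f x = (r : EReal) := by
            lift f x to ℝ using ⟨hxt, hbot x⟩ with r
            exact ⟨r, rfl⟩
          rw [if_neg hxt]
          have hdir : u + (t⁻¹ : ℝ) • (xbar - x) = t⁻¹ • (z - x) := by
            rw [hz]
            have h1 : t⁻¹ • (xbar + t • u - x) = t⁻¹ • (xbar - x) + (t⁻¹ * t) • u := by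
              module
            rw [h1, inv_mul_cancel₀ ht.ne', one_smul, add_comm]
          rw [hdir]
          have := key_bound f hconv x z t ht rxx ra hrxx hra
          refine this.trans ?_
          rw [hra, hrxx, ← EReal.coe_sub, ← EReal.coe_mul, EReal.coe_le_coe_iff]
          have hy0x : y0 < rxx := by rw [hrxx] at hx; exact_mod_cast hx
          have := inv_pos.2 ht
          nlinarith
      have hfinal : Filter.limsup
          (fun x => if f x = ⊤ then (⊥ : EReal)
            else radial f x (u + (t⁻¹ : ℝ) • (xbar - x))) (𝓝 xbar)
          ≤ ((t⁻¹ : ℝ) : EReal) * (f (xbar + t • u) - f xbar) := by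
        rw [← hz, hra, hrb, ← EReal.coe_sub, ← EReal.coe_mul]
        by_contra hcon
        push_neg at hcon
        obtain ⟨r, hr1, hr2⟩ := EReal.exists_between_coe_real hcon
        have hε : 0 < r - t⁻¹ * (ra - rb) := by
          rw [EReal.coe_lt_coe_iff] at hr1; linarith
        set y0 : ℝ := rb - (r - t⁻¹ * (ra - rb)) * t / 2 with hy0def
        have hy0lt : y0 < rb := by
          rw [hy0def]
          nlinarith
        have := hbound y0 hy0lt
        have hlt : ((t⁻¹ * (ra - y0) : ℝ) : EReal) < (r : EReal) := by
          rw [EReal.coe_lt_coe_iff, hy0def]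
          have ht' : t⁻¹ * t = 1 := inv_mul_cancel₀ ht.ne'
          nlinarith
        exact absurd (lt_of_le_of_lt (hr2.le.trans this) hlt) (lt_irrefl _)
      exact hle.trans hfinal
end

section
/- Radial stability of the upper radial subderivative: Let X be a real normed space, f : X → (-∞,+∞] lower semicontinuous, x̄ ∈ dom f and u ∈ X such that f is radially accessible at x̄ from u. Then there exists a sequence μ_n ↘ 0 such that f(x̄ + μ_n u) → f(x̄) and f^r_+(x̄;u) ≤ liminf_{n→∞} f^r(x̄ + μ_n u; u). -/
open Filter Topology

open Set

/-!
Everything happens on the line `t ↦ f (xbar + t • u)`, so let `g : ℝ → EReal` be lower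
semicontinuous with `liminf_{t → 0+} g t = g 0`. For real `c < c' < g^r_+(0;1)` pick a small `t`
with `g t > g 0 + c' t`, then, by radial accessibility, `s ∈ (0, t)` so small that `g s` is
almost `g 0`, so that `g` rises faster than slope `c` from `s` to `t`. A minimiser `μ` of
`g + c (t - ·)` on `[s, t]` lies in `[s, t)`, satisfies `g^r(μ;1) ≥ c`, and has `g μ` close to
`g 0`: from below by lower semicontinuity, from above by minimality. Hence `g^r_+(0;1)` is at most
the limsup of `g^r(·;1)` along `t → 0+, g t → g 0`, and a sequence realising that limsup works.
-/

namespace EReal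

theorem coe_le_inv_mul_sub_coe_iff {a c τ : ℝ} {y : EReal} (hτ : 0 < τ) :
    (c : EReal) ≤ ((τ⁻¹ : ℝ) : EReal) * (y - a) ↔ ((a + c * τ : ℝ) : EReal) ≤ y := by
  induction y using EReal.rec with
  | bot => simp only [bot_sub, coe_mul_bot_of_pos (inv_pos.2 hτ), le_bot_iff, coe_ne_bot]
  | top => simp only [top_sub_coe, coe_mul_top_of_pos (inv_pos.2 hτ), le_top]
  | coe y =>
    norm_cast
    rw [inv_mul_eq_div, le_div_iff₀ hτ]
    constructor <;> intro <;> linarith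

theorem coe_lt_inv_mul_sub_coe_iff {a c τ : ℝ} {y : EReal} (hτ : 0 < τ) :
    (c : EReal) < ((τ⁻¹ : ℝ) : EReal) * (y - a) ↔ ((a + c * τ : ℝ) : EReal) < y := by
  induction y using EReal.rec with
  | bot => simp only [bot_sub, coe_mul_bot_of_pos (inv_pos.2 hτ), not_lt_bot]
  | top => simp only [top_sub_coe, coe_mul_top_of_pos (inv_pos.2 hτ), coe_lt_top]
  | coe y =>
    norm_cast
    rw [inv_mul_eq_div, lt_div_iff₀ hτ]
    constructor <;> intro <;> linarith

end EReal

section LineReduction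

variable {X : Type*} [NormedAddCommGroup X] [NormedSpace ℝ X]

theorem radial_add_smul (f : X → EReal) (x u : X) (μ : ℝ) :
    radial f (x + μ • u) u = radial (fun t : ℝ => f (x + t • u)) μ 1 := by
  simp only [radial, smul_eq_mul, mul_one, add_smul, add_assoc]

theorem radialPlus_eq_radialPlus_line (f : X → EReal) (x u : X) :
    radialPlus f x u = radialPlus (fun t : ℝ => f (x + t • u)) 0 1 := by
  simp only [radialPlus, smul_eq_mul, mul_one, zero_add, zero_smul, add_zero]

theorem radialPlus_eq_bot_of_eq_top {f : X → EReal} {x : X} (u : X) (hx : f x = ⊤) :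
    radialPlus f x u = ⊥ := by
  simp only [radialPlus, hx, EReal.sub_top]
  refine le_bot_iff.1 (limsup_le_of_le (by isBoundedDefault) ?_)
  filter_upwards [self_mem_nhdsWithin] with t (ht : 0 < t)
  rw [EReal.coe_mul_bot_of_pos (inv_pos.2 ht)]

end LineReduction

theorem exists_mem_Ico_le_radial_of_add_lt {g : ℝ → EReal} (hg : LowerSemicontinuous g)
    (hbot : ∀ t, g t ≠ ⊥) {s t c : ℝ} (hst : s < t)
    (hlt : g s + ((c * (t - s) : ℝ) : EReal) < g t) :
    ∃ μ ∈ Ico s t, g μ ≤ g s + ((c * (μ - s) : ℝ) : EReal) ∧ (c : EReal) ≤ radial g μ 1 := by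
  set h : ℝ → EReal := fun ρ => g ρ + ((c * (t - ρ) : ℝ) : EReal) with h_def
  have hh : LowerSemicontinuous h :=
    hg.add' (continuous_coe_real_ereal.comp (by fun_prop)).lowerSemicontinuous fun _ =>
      EReal.continuousAt_add (.inr (EReal.coe_ne_bot _)) (.inr (EReal.coe_ne_top _))
  obtain ⟨μ, hμ, hmin⟩ :=
    (hh.lowerSemicontinuousOn _).exists_isMinOn (nonempty_Icc.2 hst.le) isCompact_Icc
  have hμs : h μ ≤ h s := hmin ⟨le_rfl, hst.le⟩
  have hμt : μ ≠ t := by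
    rintro rfl
    simp only [h_def, sub_self, mul_zero, EReal.coe_zero, add_zero] at hμs
    exact hμs.not_gt hlt
  obtain ⟨m, hm⟩ : ∃ m : ℝ, g μ = m := by
    refine ⟨(g μ).toReal, (EReal.coe_toReal (fun htop => ?_) (hbot μ)).symm⟩
    simp only [h_def, htop, EReal.top_add_coe, top_le_iff] at hμs
    exact (hlt.trans_le le_top).ne hμs
  have support : ∀ ρ ∈ Icc s t, ((m + c * (ρ - μ) : ℝ) : EReal) ≤ g ρ := by
    intro ρ hρ
    have : h μ ≤ h ρ := hmin hρ
    simp only [h_def, hm] at this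
    rw [← EReal.sub_le_iff_le_add (.inl (EReal.coe_ne_bot _)) (.inl (EReal.coe_ne_top _))]
      at this
    convert this using 1
    norm_cast
    ring
  refine ⟨μ, ⟨hμ.1, lt_of_le_of_ne hμ.2 hμt⟩, ?_, ?_⟩
  · rw [hm, ← EReal.sub_le_iff_le_add (.inl (EReal.coe_ne_bot _)) (.inl (EReal.coe_ne_top _)),
      ← EReal.coe_sub]
    convert support s ⟨le_rfl, hst.le⟩ using 2
    ring
  · rw [radial]
    apply le_liminf_of_le (by isBoundedDefault)
    filter_upwards [Ioo_mem_nhdsGT (sub_pos.2 (lt_of_le_of_ne hμ.2 hμt))] with τ hτ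
    rw [smul_eq_mul, mul_one, hm, EReal.coe_le_inv_mul_sub_coe_iff hτ.1]
    convert support (μ + τ) ⟨by linarith [hμ.1, hτ.1], by linarith [hτ.2]⟩ using 3
    ring

theorem exists_add_mul_lt_of_lt_radialPlus {g : ℝ → EReal}
    (hacc : liminf g (𝓝[>] 0) = g 0) {r c : ℝ} (hr : g 0 = r)
    (hc : (c : EReal) < radialPlus g 0 1) {δ b : ℝ} (hδ : 0 < δ) (hb : r < b) :
    ∃ s t, 0 < s ∧ s < t ∧ t < δ ∧ g s + ((c * (t - s) : ℝ) : EReal) < g t ∧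
      g s + ((|c| * t : ℝ) : EReal) < b := by
  obtain ⟨c', hcc', hc'⟩ := EReal.lt_iff_exists_real_btwn.1 hc
  have hcc : c < c' := EReal.coe_lt_coe_iff.1 hcc'
  have small : ∀ κ > 0, ∀ᶠ τ in 𝓝[>] (0:ℝ), 0 < τ ∧ τ < κ ∧ |c| * τ < κ := by
    intro κ hκ
    have hlin : Tendsto (fun τ : ℝ => |c| * τ) (𝓝[>] 0) (𝓝 0) := by
      simpa using (tendsto_id.const_mul |c| : Tendsto _ (𝓝 (0:ℝ)) _).mono_left nhdsWithin_le_nhds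
    filter_upwards [Ioo_mem_nhdsGT hκ, hlin.eventually_lt_const hκ] with τ hτ hcτ
    exact ⟨hτ.1, hτ.2, hcτ⟩
  obtain ⟨t, hrise, ht0, htδ, htb⟩ :=
    ((frequently_lt_of_lt_limsup (by isBoundedDefault) hc').and_eventually
      (small (min δ ((b - r) / 2)) (lt_min hδ (by linarith)))).exists
  simp only [zero_add, smul_eq_mul, mul_one, hr] at hrise
  rw [EReal.coe_lt_inv_mul_sub_coe_iff ht0] at hrise
  obtain ⟨η, hη, hηc, hηb⟩ : ∃ η > 0, η ≤ (c' - c) * t / 2 ∧ η ≤ (b - r) / 2 :=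
    ⟨_, lt_min (by nlinarith) (by linarith), min_le_left _ _, min_le_right _ _⟩
  have hlow : liminf g (𝓝[>] 0) < ((r + η : ℝ) : EReal) := by
    rw [hacc, hr, EReal.coe_lt_coe_iff]
    linarith
  obtain ⟨s, hs, hs0, hst, hsc⟩ :=
    ((frequently_lt_of_liminf_lt (by isBoundedDefault) hlow).and_eventually
      (small (min t ((c' - c) * t / 2)) (lt_min ht0 (by nlinarith)))).exists
  refine ⟨s, t, hs0, hst.trans_le (min_le_left _ _), htδ.trans_le (min_le_left _ _), ?_, ?_⟩
  · calc g s + ((c * (t - s) : ℝ) : EReal)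
        < ((r + η : ℝ) : EReal) + ((c * (t - s) : ℝ) : EReal) := EReal.add_lt_add_right_coe hs _
      _ ≤ ((r + c' * t : ℝ) : EReal) := by
        rw [← EReal.coe_add, EReal.coe_le_coe_iff]
        have := mul_le_mul_of_nonneg_right (neg_abs_le c) hs0.le
        linarith [min_le_right t ((c' - c) * t / 2)]
      _ < g t := hrise
  · calc g s + ((|c| * t : ℝ) : EReal)
        < ((r + η : ℝ) : EReal) + ((|c| * t : ℝ) : EReal) := EReal.add_lt_add_right_coe hs _
      _ ≤ b := by
        rw [← EReal.coe_add, EReal.coe_le_coe_iff]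
        linarith [min_le_right δ ((b - r) / 2)]

theorem frequently_le_radial {g : ℝ → EReal} (hg : LowerSemicontinuous g) (hbot : ∀ t, g t ≠ ⊥)
    (hacc : liminf g (𝓝[>] 0) = g 0) {r c : ℝ} (hr : g 0 = r)
    (hc : (c : EReal) < radialPlus g 0 1) :
    ∃ᶠ μ in comap g (𝓝 (g 0)) ⊓ 𝓝[>] 0, (c : EReal) ≤ radial g μ 1 := by
  rw [hr, (((nhds_basis_Ioo' ⟨⊥, EReal.bot_lt_coe r⟩ ⟨⊤, EReal.coe_lt_top r⟩).comap g).inf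
    (nhdsGT_basis (0:ℝ))).frequently_iff]
  rintro ⟨⟨a, b⟩, δ⟩ ⟨⟨ha, hb⟩, hδ⟩
  obtain ⟨δ', hδ', hlow⟩ := mem_nhdsGT_iff_exists_Ioo_subset.1
    (nhdsWithin_le_nhds (hg 0 a (show a < g 0 by rw [hr]; exact ha)))
  obtain ⟨b₀, hrb₀, hb₀b⟩ := EReal.lt_iff_exists_real_btwn.1 hb
  obtain ⟨s, t, hs, hst, htδ, hrise, hsb₀⟩ := exists_add_mul_lt_of_lt_radialPlus hacc hr hc
    (lt_min hδ hδ') (EReal.coe_lt_coe_iff.1 hrb₀)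
  obtain ⟨μ, ⟨hsμ, hμt⟩, hμs, hrad⟩ := exists_mem_Ico_le_radial_of_add_lt hg hbot hst hrise
  have hμ : μ ∈ Ioo 0 (min δ δ') := ⟨hs.trans_le hsμ, hμt.trans htδ⟩
  refine ⟨μ, ⟨⟨hlow ⟨hμ.1, hμ.2.trans_le (min_le_right _ _)⟩, ?_⟩,
    ⟨hμ.1, hμ.2.trans_le (min_le_left _ _)⟩⟩, hrad⟩
  calc g μ ≤ g s + ((c * (μ - s) : ℝ) : EReal) := hμs
    _ ≤ g s + ((|c| * t : ℝ) : EReal) := by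
      gcongr g s + ((?_ : ℝ) : EReal)
      nlinarith [le_abs_self c, abs_nonneg c]
    _ < b₀ := hsb₀
    _ < b := hb₀b

theorem radialPlus_le_limsup_radial {g : ℝ → EReal} (hg : LowerSemicontinuous g)
    (hbot : ∀ t, g t ≠ ⊥) (hacc : liminf g (𝓝[>] 0) = g 0) :
    radialPlus g 0 1 ≤ limsup (fun μ => radial g μ 1) (comap g (𝓝 (g 0)) ⊓ 𝓝[>] 0) := by
  rcases eq_or_ne (g 0) ⊤ with htop | htop
  · rw [radialPlus_eq_bot_of_eq_top 1 htop]
    exact bot_le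
  obtain ⟨r, hr⟩ : ∃ r : ℝ, g 0 = r := ⟨(g 0).toReal, (EReal.coe_toReal htop (hbot 0)).symm⟩
  rw [le_limsup_iff']
  intro y hy
  obtain ⟨c, hyc, hc⟩ := EReal.lt_iff_exists_real_btwn.1 hy
  exact (frequently_le_radial hg hbot hacc hr hc).mono fun μ hμ => hyc.le.trans hμ

theorem exists_seq_radialPlus_le_liminf_radial {g : ℝ → EReal} (hg : LowerSemicontinuous g)
    (hbot : ∀ t, g t ≠ ⊥) (hacc : liminf g (𝓝[>] 0) = g 0) :
    ∃ μ : ℕ → ℝ, (∀ n, 0 < μ n) ∧ Tendsto μ atTop (𝓝 0) ∧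
      Tendsto (fun n => g (μ n)) atTop (𝓝 (g 0)) ∧
      radialPlus g 0 1 ≤ liminf (fun n => radial g (μ n) 1) atTop := by
  have : NeBot (comap g (𝓝 (g 0)) ⊓ 𝓝[>] 0) :=
    neBot_inf_comap_iff_map'.2 (hacc ▸ MapClusterPt.liminf (u := g)).neBot
  obtain ⟨x, hrad, hx⟩ := exists_seq_tendsto_limsup (u := fun μ => radial g μ 1)
    (f := comap g (𝓝 (g 0)) ⊓ 𝓝[>] 0)
  obtain ⟨N, hN⟩ := eventually_atTop.1 ((tendsto_inf.1 hx).2.eventually self_mem_nhdsWithin)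
  have hshift := tendsto_add_atTop_nat N
  refine ⟨fun n => x (n + N), fun n => hN _ (Nat.le_add_left N n),
    ((tendsto_inf.1 hx).2.mono_right nhdsWithin_le_nhds).comp hshift,
    (tendsto_comap_iff.1 (tendsto_inf.1 hx).1).comp hshift, ?_⟩
  exact (radialPlus_le_limsup_radial hg hbot hacc).trans_eq (hrad.comp hshift).liminf_eq.symm

theorem radial_stability_of_upper_radial_general {X : Type*} [NormedAddCommGroup X] [NormedSpace ℝ X]
    (f : X → EReal) (hf : LowerSemicontinuous f) (hbot : ∀ y, f y ≠ ⊥)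
    (xbar : X) (u : X)
    (hacc : Filter.liminf (fun t : ℝ => f (xbar + t • u)) (𝓝[>] (0:ℝ)) = f xbar) :
    ∃ μ : ℕ → ℝ, (∀ n, 0 < μ n) ∧ Filter.Tendsto μ Filter.atTop (𝓝 (0:ℝ)) ∧
      Filter.Tendsto (fun n => f (xbar + μ n • u)) Filter.atTop (𝓝 (f xbar)) ∧
      radialPlus f xbar u ≤
        Filter.liminf (fun n => radial f (xbar + μ n • u) u) Filter.atTop := by
  have hline : (fun t : ℝ => f (xbar + t • u)) 0 = f xbar := by simp
  obtain ⟨μ, hμ, hμ0, hfμ, hrad⟩ := exists_seq_radialPlus_le_liminf_radial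
    (g := fun t : ℝ => f (xbar + t • u)) (hf.comp (by fun_prop)) (fun _ => hbot _)
    (hacc.trans hline.symm)
  refine ⟨μ, hμ, hμ0, hline ▸ hfμ, ?_⟩
  rw [radialPlus_eq_radialPlus_line]
  simpa only [radial_add_smul] using hrad

theorem radial_stability_of_upper_radial {X : Type*} [NormedAddCommGroup X] [NormedSpace ℝ X]
    (f : X → EReal) (hf : LowerSemicontinuous f) (hbot : ∀ y, f y ≠ ⊥)
    (xbar : X) (hxbar : f xbar ≠ ⊤) (u : X)
    (hacc : Filter.liminf (fun t : ℝ => f (xbar + t • u)) (𝓝[>] (0:ℝ)) = f xbar) :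
    ∃ μ : ℕ → ℝ, (∀ n, 0 < μ n) ∧ Filter.Tendsto μ Filter.atTop (𝓝 (0:ℝ)) ∧
      Filter.Tendsto (fun n => f (xbar + μ n • u)) Filter.atTop (𝓝 (f xbar)) ∧
      radialPlus f xbar u ≤
        Filter.liminf (fun n => radial f (xbar + μ n • u) u) Filter.atTop :=
  radial_stability_of_upper_radial_general f hf hbot xbar u hacc
end

section
/- Let X be a real normed space, f : X → (-∞,+∞] lsc, x̄ ∈ dom f, u ∈ X, and suppose f is radially accessible at x̄ from u. Then for every α ≥ 0, f^r_+(x̄;u) ≤ limsup_{x →_u x̄} f^r(x; u + α(x̄ − x)), where x →_u x̄ means x = x̄ + t v' with t ↘ 0 and v' → u (directional convergence from direction u). -/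
/-
Suppose the directional limsup is below `r < r'`. Along the ray `x_t = xbar + t • u` one has
`u + α • (xbar - x_t) = (1 - α t) • u`, so for small `t > 0` with `f x_t` finite the lower radial
subderivative at `x_t` in direction `(1 - α t) • u` is below `r`, which produces points `s > t`
arbitrarily close to `t` with `φ s ≤ φ t + r' (s - t)`, where `φ t = f x_t`. For a lower
semicontinuous `φ` such right-hand steps propagate, by a supremum argument, to
`φ b ≤ φ a + r' (b - a)` for `0 < a < b` small; radial accessibility lets `a ↘ 0`, giving
`φ b ≤ f xbar + r' b`, i.e. `f^r_+(xbar; u) ≤ r'`.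
-/

open Filter Topology

/-- The "drop" `xbar + ]0, ε B(v,ε)[`. -/
def drop {X : Type*} [NormedAddCommGroup X] [NormedSpace ℝ X]
    (xbar v : X) (ε : ℝ) : Set X :=
  {y | ∃ t : ℝ, ∃ v' : X, 0 < t ∧ t < ε ∧ ‖v' - v‖ < ε ∧ y = xbar + t • v'}

/-- The filter of directional convergence `x →_v xbar`. -/
noncomputable def dirFilter {X : Type*} [NormedAddCommGroup X] [NormedSpace ℝ X]
    (xbar v : X) : Filter X :=
  ⨅ ε : {e : ℝ // 0 < e}, Filter.principal (drop xbar v (ε : ℝ))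

theorem EReal.coe_inv_mul_sub_le_coe_iff {t : ℝ} (ht : 0 < t) (x y : EReal) (r : ℝ) :
    ((t⁻¹ : ℝ) : EReal) * (y - x) ≤ r ↔ y ≤ x + (r * t : ℝ) := by
  have ht' : (0 : EReal) < (t⁻¹ : ℝ) := by exact_mod_cast inv_pos.2 ht
  induction x using EReal.rec <;> induction y using EReal.rec
  all_goals try simp [EReal.mul_top_of_pos ht', EReal.mul_bot_of_pos ht', -EReal.coe_mul,
    -EReal.coe_add]
  · norm_cast
    rw [inv_mul_le_iff₀ ht, mul_comm, sub_le_iff_le_add']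
  · exact EReal.coe_ne_top _

theorem LowerSemicontinuous.le_of_forall_frequently_le_right {β : Type*} [LinearOrder β]
    {ψ : ℝ → β} (hψ : LowerSemicontinuous ψ) {a b : ℝ} (hab : a ≤ b)
    (hstep : ∀ t ∈ Set.Ico a b, ψ t ≤ ψ a → ∃ᶠ s in 𝓝[>] t, ψ s ≤ ψ t) : ψ b ≤ ψ a := by
  set S := Set.Icc a b ∩ ψ ⁻¹' Set.Iic (ψ a)
  have haS : a ∈ S := ⟨⟨le_rfl, hab⟩, le_rfl⟩
  have hbdd : BddAbove S := ⟨b, fun t ht => ht.1.2⟩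
  have hmS : sSup S ∈ S :=
    (isClosed_Icc.inter (hψ.isClosed_preimage _)).csSup_mem ⟨a, haS⟩ hbdd
  obtain hmb | hmb := hmS.1.2.lt_or_eq
  · obtain ⟨s, hs, hsm, hsb⟩ := ((hstep _ ⟨hmS.1.1, hmb⟩ hmS.2).and_eventually
      (Ioo_mem_nhdsGT hmb)).exists
    exact absurd (le_csSup hbdd ⟨⟨hmS.1.1.trans hsm.le, hsb.le⟩, hs.trans hmS.2⟩) hsm.not_ge
  · exact hmb ▸ hmS.2

theorem LowerSemicontinuous.eventually_nhdsGT_le_add_mul {φ : ℝ → EReal}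
    (hφ : LowerSemicontinuous φ) (hacc : liminf φ (𝓝[>] 0) ≤ φ 0) {r : ℝ}
    (hstep : ∀ᶠ t in 𝓝[>] 0, φ t ≠ ⊤ → ∃ᶠ s in 𝓝[>] t, φ s ≤ φ t + (r * (s - t) : ℝ)) :
    ∀ᶠ b in 𝓝[>] 0, φ b ≤ φ 0 + (r * b : ℝ) := by
  set ψ : ℝ → EReal := fun t => ((-(r * t) : ℝ) : EReal) + φ t
  have hψ : LowerSemicontinuous ψ :=
    (continuous_coe_real_ereal.comp (by fun_prop)).lowerSemicontinuous.add' hφ fun _ =>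
      EReal.continuousAt_add (.inl (EReal.coe_ne_top _)) (.inl (EReal.coe_ne_bot _))
  have hψ_step {t s : ℝ} (h : φ s ≤ φ t + (r * (s - t) : ℝ)) : ψ s ≤ ψ t :=
    calc ψ s ≤ ((-(r * s) : ℝ) : EReal) + (φ t + (r * (s - t) : ℝ)) := add_le_add_right h _
      _ = ψ t := by
        rw [add_comm (φ t), ← add_assoc, ← EReal.coe_add]
        congr 2
        ring
  obtain ⟨δ, hδ, hstepδ⟩ := mem_nhdsGT_iff_exists_Ioo_subset.1 hstep
  filter_upwards [Ioo_mem_nhdsGT hδ] with b hb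
  have hanti : ∀ᶠ a in 𝓝[>] 0, ψ b ≤ ψ a := by
    filter_upwards [Ioo_mem_nhdsGT hb.1] with a ha
    obtain hatop | hatop := eq_or_ne (ψ a) ⊤
    · exact hatop ▸ le_top
    refine hψ.le_of_forall_frequently_le_right ha.2.le fun t ht hta => ?_
    have htop : φ t ≠ ⊤ := fun h => hatop (top_le_iff.1 (hta.trans_eq' (by
      simp only [ψ, h, EReal.coe_add_top])))
    exact (hstepδ ⟨ha.1.trans_le ht.1, ht.2.trans hb.2⟩ htop).mono fun s => hψ_step
  have hlin : Tendsto (fun t => ((-(r * t) : ℝ) : EReal)) (𝓝[>] 0) (𝓝 0) :=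
    (continuous_coe_real_ereal.tendsto' _ _ (by simp)).comp
      ((Continuous.tendsto' (by fun_prop) 0 0 (by simp)).mono_left nhdsWithin_le_nhds)
  have hψb : ψ b ≤ φ 0 :=
    calc ψ b ≤ liminf ψ (𝓝[>] 0) := le_liminf_of_le (by isBoundedDefault) hanti
      _ ≤ limsup (fun t => ((-(r * t) : ℝ) : EReal)) (𝓝[>] 0) + liminf φ (𝓝[>] 0) :=
        EReal.liminf_add_le (.inl (by rw [hlin.limsup_eq]; exact EReal.zero_ne_bot))
          (.inl (by rw [hlin.limsup_eq]; exact EReal.zero_ne_top))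
      _ ≤ φ 0 := by rwa [hlin.limsup_eq, zero_add]
  calc φ b = (r * b : ℝ) + ψ b := by rw [← add_assoc, ← EReal.coe_add]; simp
    _ ≤ (r * b : ℝ) + φ 0 := add_le_add_right hψb _
    _ = φ 0 + (r * b : ℝ) := add_comm _ _

section

variable {X : Type*} [NormedAddCommGroup X] [NormedSpace ℝ X]

theorem frequently_le_add_of_radial_lt {f : X → EReal} {x v : X} {r : ℝ}
    (h : radial f x v < r) : ∃ᶠ s in 𝓝[>] (0 : ℝ), f (x + s • v) ≤ f x + (r * s : ℝ) :=
  ((frequently_lt_of_liminf_lt (by isBoundedDefault) h).and_eventually self_mem_nhdsWithin).mono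
    fun _ ⟨hs, hs0⟩ => (EReal.coe_inv_mul_sub_le_coe_iff hs0 _ _ _).1 hs.le

theorem frequently_ray_le_add_of_radial_smul_lt {f : X → EReal} {xbar u : X} {t c r r' : ℝ}
    (hc : 0 < c) (hr : r ≤ r' * c) (h : radial f (xbar + t • u) (c • u) < r) :
    ∃ᶠ s in 𝓝[>] t, f (xbar + s • u) ≤ f (xbar + t • u) + (r' * (s - t) : ℝ) := by
  have hmap : Tendsto (fun s : ℝ => t + s * c) (𝓝[>] 0) (𝓝[>] t) :=
    tendsto_nhdsWithin_of_tendsto_nhds_of_eventually_within _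
      ((Continuous.tendsto' (by fun_prop) 0 t (by simp)).mono_left nhdsWithin_le_nhds)
      (eventually_nhdsWithin_of_forall fun s (hs : 0 < s) => by
        simpa using mul_pos hs hc)
  refine hmap.frequently (((frequently_le_add_of_radial_lt h).and_eventually
    self_mem_nhdsWithin).mono fun s ⟨hs, (hs0 : 0 < s)⟩ => ?_)
  rw [show xbar + (t + s * c) • u = xbar + t • u + s • c • u by module, add_sub_cancel_left]
  exact hs.trans (add_le_add_right (EReal.coe_le_coe_iff.2 (by nlinarith)) _)

theorem tendsto_add_smul_dirFilter (xbar u : X) :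
    Tendsto (fun t : ℝ => xbar + t • u) (𝓝[>] 0) (dirFilter xbar u) := by
  simp only [dirFilter, tendsto_iInf, tendsto_principal]
  rintro ⟨ε, hε⟩
  filter_upwards [Ioo_mem_nhdsGT hε] with t ht
  exact ⟨t, u, ht.1, ht.2, by simpa using hε, rfl⟩

end

theorem upper_radial_le_directional_limsup_general {X : Type*} [NormedAddCommGroup X] [NormedSpace ℝ X]
    (f : X → EReal) (hf : LowerSemicontinuous f)
    (xbar : X) (u : X)
    (hacc : Filter.liminf (fun t : ℝ => f (xbar + t • u)) (𝓝[>] (0:ℝ)) = f xbar) :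
    ∀ α : ℝ, 0 ≤ α →
      radialPlus f xbar u ≤
        Filter.limsup
          (fun x => if f x = ⊤ then (⊥ : EReal)
            else radial f x (u + α • (xbar - x))) (dirFilter xbar u) := by
  intro α _
  refine le_of_forall_gt_imp_ge_of_dense fun a ha => ?_
  obtain ⟨r, hr, hra⟩ := EReal.exists_between_coe_real ha
  obtain ⟨r', hrr', hr'a⟩ := EReal.exists_between_coe_real hra
  have hscale : ∀ᶠ t in 𝓝 (0 : ℝ), 0 < 1 - α * t ∧ r ≤ r' * (1 - α * t) := by
    have hlin : Tendsto (fun t : ℝ => 1 - α * t) (𝓝 0) (𝓝 1) :=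
      Continuous.tendsto' (by fun_prop) 0 1 (by simp)
    exact (hlin.eventually (lt_mem_nhds one_pos)).and
      ((hlin.const_mul r').eventually (le_mem_nhds (by simpa using hrr')))
  have hstep : ∀ᶠ t in 𝓝[>] (0 : ℝ), f (xbar + t • u) ≠ ⊤ →
      ∃ᶠ s in 𝓝[>] t, f (xbar + s • u) ≤ f (xbar + t • u) + (r' * (s - t) : ℝ) := by
    filter_upwards [(tendsto_add_smul_dirFilter xbar u).eventually (eventually_lt_of_limsup_lt hr),
      nhdsWithin_le_nhds hscale] with t ht ⟨hc, hcr⟩ htop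
    rw [if_neg htop, show u + α • (xbar - (xbar + t • u)) = (1 - α * t) • u by module] at ht
    exact frequently_ray_le_add_of_radial_smul_lt hc hcr ht
  have hlsc : LowerSemicontinuous fun t : ℝ => f (xbar + t • u) := hf.comp (by fun_prop)
  refine (limsup_le_of_le (by isBoundedDefault) ?_).trans hr'a.le
  filter_upwards [hlsc.eventually_nhdsGT_le_add_mul (by simpa using hacc.le) hstep,
    self_mem_nhdsWithin] with b hb (hb0 : 0 < b)
  exact (EReal.coe_inv_mul_sub_le_coe_iff hb0 _ _ _).2 (by simpa using hb)

theorem upper_radial_le_directional_limsup {X : Type*} [NormedAddCommGroup X] [NormedSpace ℝ X]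
    (f : X → EReal) (hf : LowerSemicontinuous f) (hbot : ∀ y, f y ≠ ⊥)
    (xbar : X) (hxbar : f xbar ≠ ⊤) (u : X)
    (hacc : Filter.liminf (fun t : ℝ => f (xbar + t • u)) (𝓝[>] (0:ℝ)) = f xbar) :
    ∀ α : ℝ, 0 ≤ α →
      radialPlus f xbar u ≤
        Filter.limsup
          (fun x => if f x = ⊤ then (⊥ : EReal)
            else radial f x (u + α • (xbar - x))) (dirFilter xbar u) :=
  upper_radial_le_directional_limsup_general f hf xbar u hacc
end

section
/- Directional density of the convex subdifferential: Let X be a Banach space, f : X → (-∞,+∞] convex lower semicontinuous, x̄ ∈ dom f and u ∈ X with x̄ + u ∈ dom f. Then there exists a sequence ((x_n, x_n*)) in the graph of ∂_MR f such that x_n →_u x̄ (i.e. x_n = x̄ + t_n v_n with t_n ↘ 0, v_n → u), f(x_n) → f(x̄), and limsup_n ⟨x_n*, x_n − x̄⟩ ≤ 0. -/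
/-!
For small `t > 0` put `z = x̄ + t u`; convexity gives `f z ≤ (1 - t) f x̄ + t f (x̄ + u)`.
Separating a point below the graph from the closed convex epigraph gives an `ε`-subgradient `ℓ`
at `z`, so `f - ℓ` is bounded below and `z` is `ε`-minimal for it. Ekeland's principle then
yields `x` with `‖x - z‖ ≤ t²` and `f x ≤ f z` at which `f - ℓ + κ ‖· - x‖` is minimal, and a
second separation (the sandwich theorem) turns this into a subgradient `x*` at `x` with
`‖x* - ℓ‖ ≤ κ`, hence `x* (x - z) ≤ 2t`. Lower semicontinuity and the bound on `f x` give
`f xₙ → f x̄`, and the subgradient inequality tested at `x̄ + u` gives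
`(1 - t) x* (x - x̄) ≤ t (2 + f (x̄ + u) - f x) → 0`.
-/

open Filter Topology

open Set

theorem LowerSemicontinuous.add_real {α : Type*} [TopologicalSpace α] {f : α → EReal}
    (hf : LowerSemicontinuous f) {g : α → ℝ} (hg : Continuous g) :
    LowerSemicontinuous fun y => f y + g y :=
  hf.add' (continuous_coe_real_ereal.comp hg).lowerSemicontinuous fun _ =>
    EReal.continuousAt_add (.inr (EReal.coe_ne_bot _)) (.inr (EReal.coe_ne_top _))

theorem EReal.exists_mem_forall_le_add {ι : Type*} {s : Set ι} (hs : s.Nonempty) {g : ι → EReal}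
    {b : ℝ} (hb : ∀ y ∈ s, (b : EReal) ≤ g y) {δ : ℝ} (hδ : 0 < δ) :
    ∃ y ∈ s, ∀ w ∈ s, g y ≤ g w + δ := by
  set m := sInf (g '' s)
  have hm : ∀ w ∈ s, m ≤ g w := fun w hw => sInf_le (mem_image_of_mem g hw)
  by_cases hm_top : m = ⊤
  · obtain ⟨y, hy⟩ := hs
    refine ⟨y, hy, fun w hw => ?_⟩
    simp [top_le_iff.1 (hm_top ▸ hm w hw)]
  have hm_bot : m ≠ ⊥ := ne_bot_of_le_ne_bot (EReal.coe_ne_bot b) (le_sInf (forall_mem_image.2 hb))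
  lift m to ℝ using ⟨hm_top, hm_bot⟩ with r hr
  obtain ⟨_, ⟨y, hy, rfl⟩, hlt⟩ : ∃ a ∈ g '' s, a < (r + δ : ℝ) :=
    sInf_lt_iff.1 (by
      rw [show sInf (g '' s) = r from hr.symm]; exact_mod_cast lt_add_of_pos_right r hδ)
  exact ⟨y, hy, fun w hw => hlt.le.trans (by rw [EReal.coe_add]; gcongr; exact hr ▸ hm w hw)⟩

theorem EReal.le_of_add_le_add_left {a : EReal} (ha : a ≠ ⊥) (ha' : a ≠ ⊤) {b c : ℝ}
    (h : a + b ≤ a + c) : b ≤ c := by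
  lift a to ℝ using ⟨ha', ha⟩
  rw [← EReal.coe_add, ← EReal.coe_add, EReal.coe_le_coe_iff] at h
  linarith

theorem EReal.coe_le_add_coe_iff {a c : ℝ} {b : EReal} :
    (a : EReal) ≤ b + c ↔ ((a - c : ℝ) : EReal) ≤ b := by
  rw [EReal.coe_sub,
    EReal.sub_le_iff_le_add (.inl (EReal.coe_ne_bot c)) (.inl (EReal.coe_ne_top c))]

theorem LowerSemicontinuousAt.tendsto_of_le {α β ι : Type*} [TopologicalSpace α] [LinearOrder β]
    [TopologicalSpace β] [OrderTopology β] {f : α → β} {a : α} (hf : LowerSemicontinuousAt f a)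
    {l : Filter ι} {x : ι → α} (hx : Tendsto x l (𝓝 a)) {b : ι → β} (hb : Tendsto b l (𝓝 (f a)))
    (hle : ∀ᶠ i in l, f (x i) ≤ b i) : Tendsto (fun i => f (x i)) l (𝓝 (f a)) :=
  tendsto_order.2 ⟨fun y hy => hx.eventually (hf y hy), fun _ hy =>
    (hle.and (hb.eventually (gt_mem_nhds hy))).mono fun _ hi => hi.1.trans_lt hi.2⟩

theorem limsup_coe_le_zero_of_one_sub_mul_le {t p c : ℕ → ℝ} {C : ℝ} (ht : ∀ n, t n < 1)
    (ht0 : Tendsto t atTop (𝓝 0)) (hc : Tendsto c atTop (𝓝 C))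
    (hp : ∀ n, (1 - t n) * p n ≤ t n * c n) :
    limsup (fun n => (p n : EReal)) atTop ≤ 0 := by
  have hb : Tendsto (fun n => t n * c n / (1 - t n)) atTop (𝓝 0) := by
    have := (ht0.mul hc).div (tendsto_const_nhds (x := (1 : ℝ)).sub ht0) (by norm_num)
    rwa [zero_mul, zero_div] at this
  calc limsup (fun n => (p n : EReal)) atTop
      ≤ limsup (fun n => ((t n * c n / (1 - t n) : ℝ) : EReal)) atTop :=
        limsup_le_limsup (Eventually.of_forall fun n => EReal.coe_le_coe_iff.2
          ((le_div_iff₀ (sub_pos.2 (ht n))).2 (by linarith [hp n])))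
    _ = 0 := (continuous_coe_real_ereal.tendsto 0 |>.comp hb).limsup_eq

section Ekeland

variable {α : Type*} [PseudoMetricSpace α] {g : α → EReal} {κ : ℝ} {x y : α}

def ekelandSet (g : α → EReal) (κ : ℝ) (x : α) : Set α :=
  {y | g y + (κ * dist y x : ℝ) ≤ g x}

theorem self_mem_ekelandSet : x ∈ ekelandSet g κ x := by
  simp [ekelandSet]

theorem le_of_mem_ekelandSet (hκ : 0 ≤ κ) (hy : y ∈ ekelandSet g κ x) : g y ≤ g x :=
  (le_add_of_nonneg_right (by exact_mod_cast mul_nonneg hκ dist_nonneg)).trans hy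

theorem ekelandSet_subset (hκ : 0 ≤ κ) (hy : y ∈ ekelandSet g κ x) :
    ekelandSet g κ y ⊆ ekelandSet g κ x := fun w hw =>
  calc g w + (κ * dist w x : ℝ) ≤ g w + (κ * dist w y : ℝ) + (κ * dist y x : ℝ) := by
        rw [add_assoc, ← EReal.coe_add, ← mul_add]
        gcongr
        exact dist_triangle w y x
    _ ≤ g y + (κ * dist y x : ℝ) := by gcongr; exact hw
    _ ≤ g x := hy

theorem LowerSemicontinuous.isClosed_ekelandSet (hg : LowerSemicontinuous g) :
    IsClosed (ekelandSet g κ x) :=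
  (hg.add_real (continuous_const.mul (continuous_id.dist continuous_const))).isClosed_preimage (g x)

theorem LowerSemicontinuous.exists_ekeland_point [CompleteSpace α] (hg : LowerSemicontinuous g)
    {b : ℝ} (hb : ∀ y, (b : EReal) ≤ g y) {z : α} (hz : g z ≠ ⊤) (hκ : 0 < κ) :
    ∃ x, g x + (κ * dist x z : ℝ) ≤ g z ∧ ∀ y, g x ≤ g y + (κ * dist y x : ℝ) := by
  set δ : ℕ → ℝ := fun k => 1 / (k + 1)
  -- `x (k + 1)` is a `δ k`-minimizer of `g` on `ekelandSet g κ (x k)`. These sets are nested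
  -- and closed, and the near-minimality forces their radii below `δ k / κ`.
  choose F hF hFle using fun (k : ℕ) (x : α) =>
    EReal.exists_mem_forall_le_add ⟨x, self_mem_ekelandSet (g := g) (κ := κ)⟩ (fun y _ => hb y)
      (Nat.one_div_pos_of_nat : 0 < δ k)
  let x : ℕ → α := fun k => Nat.rec z F k
  have hmono : ∀ {k l}, k ≤ l → ekelandSet g κ (x l) ⊆ ekelandSet g κ (x k) := by
    intro k l hkl
    induction hkl with
    | refl => rfl
    | step _ ih => exact (ekelandSet_subset hκ.le (hF _ _)).trans ih
  have hmem : ∀ {k l}, k ≤ l → x l ∈ ekelandSet g κ (x k) := fun h => hmono h self_mem_ekelandSet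
  have hdist : ∀ {k l}, k < l → κ * dist (x l) (x (k + 1)) ≤ δ k := by
    intro k l hkl
    have hfin : g (x l) ≠ ⊤ :=
      ne_top_of_le_ne_top hz (le_of_mem_ekelandSet hκ.le (hmem (Nat.zero_le l)))
    exact EReal.le_of_add_le_add_left (ne_bot_of_le_ne_bot (EReal.coe_ne_bot b) (hb _)) hfin
      ((hmem hkl).trans (hFle k (x k) (x l) (hmem hkl.le)))
  have hcauchy : CauchySeq x := Metric.cauchySeq_iff'.2 fun ε hε => by
    obtain ⟨k, hk⟩ := exists_nat_one_div_lt (mul_pos hκ hε)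
    refine ⟨k + 1, fun l hl => ?_⟩
    have := hdist (Nat.lt_of_succ_le hl)
    exact (mul_lt_mul_iff_right₀ hκ).1 (this.trans_lt hk)
  obtain ⟨xh, hxh⟩ := cauchySeq_tendsto_of_complete hcauchy
  have hxh_mem : ∀ k, xh ∈ ekelandSet g κ (x k) := fun k =>
    hg.isClosed_ekelandSet.mem_of_tendsto hxh ((eventually_ge_atTop k).mono fun l hl => hmem hl)
  refine ⟨xh, hxh_mem 0, fun y => ?_⟩
  by_cases hy : y ∈ ekelandSet g κ xh
  · have hle : ∀ k, g xh ≤ g y + δ k := fun k =>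
      (le_of_mem_ekelandSet hκ.le (hxh_mem (k + 1))).trans
        (hFle k (x k) y (ekelandSet_subset hκ.le (hxh_mem k) hy))
    have hlim : Tendsto (fun k => g y + δ k) atTop (𝓝 (g y + (0 : ℝ))) :=
      (EReal.continuousAt_add (.inr (EReal.coe_ne_bot _)) (.inr (EReal.coe_ne_top _))).tendsto.comp
        (tendsto_const_nhds.prodMk_nhds
          (continuous_coe_real_ereal.tendsto 0 |>.comp tendsto_one_div_add_atTop_nhds_zero_nat))
    rw [EReal.coe_zero, add_zero] at hlim
    exact (ge_of_tendsto' hlim hle).trans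
      (le_add_of_nonneg_right (by exact_mod_cast mul_nonneg hκ.le dist_nonneg))
  · exact (not_le.1 hy).le

end Ekeland

def realEpigraph {α : Type*} (f : α → EReal) : Set (α × ℝ) :=
  {p | f p.1 ≤ p.2}

theorem LowerSemicontinuous.isClosed_realEpigraph {α : Type*} [TopologicalSpace α] {f : α → EReal}
    (hf : LowerSemicontinuous f) : IsClosed (realEpigraph f) :=
  hf.isClosed_epigraph.preimage
    (continuous_fst.prodMk (continuous_coe_real_ereal.comp continuous_snd))

section Subgradient

variable {X : Type*} [NormedAddCommGroup X] [NormedSpace ℝ X] {f : X → EReal}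

def HasSubgradientAt (f : X → EReal) (x' : X →L[ℝ] ℝ) (x : X) : Prop :=
  ∀ y, ((x' (y - x) : ℝ) : EReal) + f x ≤ f y

theorem convex_realEpigraph
    (hconv : ∀ x y : X, ∀ t : ℝ, 0 ≤ t → t ≤ 1 →
      f ((1 - t) • x + t • y) ≤ (((1 - t : ℝ)) : EReal) * f x + ((t : ℝ) : EReal) * f y) :
    Convex ℝ (realEpigraph f) := by
  rintro p (hp : f p.1 ≤ p.2) q (hq : f q.1 ≤ q.2) a b ha hb hab
  obtain rfl : a = 1 - b := by linarith
  show f ((1 - b) • p.1 + b • q.1) ≤ ((1 - b) * p.2 + b * q.2 : ℝ)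
  calc f ((1 - b) • p.1 + b • q.1) ≤ ((1 - b : ℝ) : EReal) * f p.1 + (b : EReal) * f q.1 :=
        hconv _ _ b hb (by linarith)
    _ ≤ ((1 - b : ℝ) : EReal) * p.2 + (b : EReal) * q.2 := by
        gcongr
    _ = ((1 - b) * p.2 + b * q.2 : ℝ) := by norm_cast

theorem ContinuousLinearMap.apply_prod_real (Φ : X × ℝ →L[ℝ] ℝ) (y : X) (r : ℝ) :
    Φ (y, r) = Φ.comp (.inl ℝ X ℝ) y + r * Φ (0, 1) := by
  have := Φ.map_smul r ((0 : X), (1 : ℝ))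
  simp only [Prod.smul_mk, smul_zero, smul_eq_mul, mul_one] at this
  rw [← Φ.comp_inl_add_comp_inr]
  simp [this]

theorem exists_eps_subgradient (hE : Convex ℝ (realEpigraph f)) (hf : LowerSemicontinuous f)
    {z : X} {c : ℝ} (hz : f z = c) {ε : ℝ} (hε : 0 < ε) :
    ∃ ℓ : X →L[ℝ] ℝ, ∀ y, ((ℓ (y - z) + c - ε : ℝ) : EReal) ≤ f y := by
  have hz' : (z, c - ε) ∉ realEpigraph f := by
    simp only [realEpigraph, mem_ofPred_eq, hz, EReal.coe_le_coe_iff]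
    linarith
  obtain ⟨Φ, s, hΦE, hΦz⟩ := geometric_hahn_banach_closed_point hE hf.isClosed_realEpigraph hz'
  set ψ := Φ.comp (.inl ℝ X ℝ)
  set α := Φ (0, 1)
  have hepi : ∀ (y : X) (r : ℝ), f y ≤ r → ψ y + r * α < s := fun y r h =>
    Φ.apply_prod_real y r ▸ hΦE _ h
  rw [Φ.apply_prod_real] at hΦz
  have hα : α < 0 := by nlinarith [hepi z c hz.le]
  refine ⟨(-α)⁻¹ • ψ, fun y => EReal.le_of_forall_lt_iff_le.1 fun r hr => ?_⟩
  have h := hepi y r hr.le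
  have : (-α)⁻¹ * ψ (y - z) ≤ r - c + ε := by
    rw [inv_mul_le_iff₀ (by linarith), map_sub]
    nlinarith
  rw [smul_apply, smul_eq_mul, EReal.coe_le_coe_iff]
  linarith

theorem exists_affine_between (hE : Convex ℝ (realEpigraph f)) (hne : (realEpigraph f).Nonempty)
    {q : X → ℝ} (hq : ConcaveOn ℝ univ q) (hqc : Continuous q) (hqf : ∀ y, (q y : EReal) ≤ f y) :
    ∃ (ℓ : X →L[ℝ] ℝ) (c : ℝ), ∀ y, q y ≤ ℓ y + c ∧ ((ℓ y + c : ℝ) : EReal) ≤ f y := by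
  have hO : IsOpen {p : X × ℝ | p.1 ∈ univ ∧ p.2 < q p.1} := by
    simpa using isOpen_lt continuous_snd (hqc.comp continuous_fst)
  have hdisj : Disjoint {p : X × ℝ | p.1 ∈ univ ∧ p.2 < q p.1} (realEpigraph f) :=
    disjoint_left.2 fun p hp (hpE : f p.1 ≤ p.2) =>
      (EReal.coe_lt_coe_iff.2 hp.2).not_ge ((hqf p.1).trans hpE)
  obtain ⟨Φ, s, hΦO, hΦE⟩ := geometric_hahn_banach_open hq.convex_strict_hypograph hO hE hdisj
  set ψ := Φ.comp (.inl ℝ X ℝ)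
  set α := Φ (0, 1)
  have hhyp : ∀ (y : X) (r : ℝ), r < q y → ψ y + r * α < s := fun y r h =>
    Φ.apply_prod_real y r ▸ hΦO (y, r) ⟨mem_univ y, h⟩
  have hepi : ∀ (y : X) (r : ℝ), f y ≤ r → s ≤ ψ y + r * α := fun y r h =>
    Φ.apply_prod_real y r ▸ hΦE (y, r) h
  obtain ⟨⟨y₀, r₀⟩, h₀ : f y₀ ≤ r₀⟩ := hne
  have hα : 0 < α := by
    have : q y₀ ≤ r₀ := EReal.coe_le_coe_iff.1 ((hqf y₀).trans h₀)
    nlinarith [hhyp y₀ (q y₀ - 1) (by linarith), hepi y₀ r₀ h₀]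
  have haff : ∀ y, (-α⁻¹ • ψ) y + s / α = (s - ψ y) / α := fun y => by
    rw [smul_apply, smul_eq_mul]
    field_simp
    ring
  refine ⟨-α⁻¹ • ψ, s / α, fun y => ⟨le_of_forall_lt fun r hr => ?_,
    EReal.le_of_forall_lt_iff_le.1 fun r hr => ?_⟩⟩
  · rw [haff, lt_div_iff₀ hα]
    linarith [hhyp y r hr]
  · rw [haff, EReal.coe_le_coe_iff, div_le_iff₀ hα]
    linarith [hepi y r hr.le]

theorem exists_hasSubgradientAt_norm_sub_le (hE : Convex ℝ (realEpigraph f)) {x : X} {c : ℝ}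
    (hx : f x = c) {ℓ : X →L[ℝ] ℝ} {κ : ℝ} (hκ : 0 ≤ κ)
    (hle : ∀ y, ((c + ℓ (y - x) - κ * ‖y - x‖ : ℝ) : EReal) ≤ f y) :
    ∃ x', HasSubgradientAt f x' x ∧ ‖x' - ℓ‖ ≤ κ := by
  have hnorm : ConvexOn ℝ univ (fun y => ‖y - x‖) := by
    convert (convexOn_norm (convex_univ : Convex ℝ (univ : Set X))).translate_right (-x) using 1
    · simp
    · ext y; simp [neg_add_eq_sub]
  have hq : ConcaveOn ℝ univ (fun y => c + ℓ (y - x) - κ * ‖y - x‖) :=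
    (((ℓ.toLinearMap.concaveOn convex_univ).add_const (c - ℓ x)).sub (hnorm.smul hκ)).congr
      fun y _ => by simp; ring
  obtain ⟨ℓ', c', h⟩ := exists_affine_between hE ⟨(x, c), hx.le⟩ hq (by fun_prop) hle
  have hcx : ℓ' x + c' = c :=
    le_antisymm (EReal.coe_le_coe_iff.1 (hx ▸ (h x).2)) (by simpa using (h x).1)
  refine ⟨ℓ', fun y => ?_, (ℓ' - ℓ).opNorm_le_bound hκ fun w => ?_⟩
  · convert (h y).2 using 1
    rw [map_sub, hx, ← EReal.coe_add]
    congr 1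
    linarith
  · have h₁ := (h (x + w)).1
    have h₂ := (h (x - w)).1
    simp only [add_sub_cancel_left, sub_sub_cancel_left, norm_neg, map_add, map_sub, map_neg]
      at h₁ h₂
    rw [sub_apply, Real.norm_eq_abs, abs_le]
    constructor <;> linarith

theorem exists_cone_le_of_eps_subgradient [CompleteSpace X] (hf : LowerSemicontinuous f)
    {z : X} {c ε : ℝ} (hz : f z = c) {ℓ : X →L[ℝ] ℝ}
    (hℓ : ∀ y, ((ℓ (y - z) + c - ε : ℝ) : EReal) ≤ f y) {κ : ℝ} (hκ : 0 < κ) :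
    ∃ x, ∃ a : ℝ, f x = a ∧ a + κ * ‖x - z‖ ≤ c + ℓ (x - z) ∧
      ∀ y, ((a + ℓ (y - x) - κ * ‖y - x‖ : ℝ) : EReal) ≤ f y := by
  set g : X → EReal := fun y => f y + (-ℓ y : ℝ)
  have hb : ∀ y, ((c - ℓ z - ε : ℝ) : EReal) ≤ g y := fun y => by
    rw [EReal.coe_le_add_coe_iff]
    convert hℓ y using 2
    rw [map_sub]
    ring
  have hgz : g z = (c - ℓ z : ℝ) := by simp only [g, hz, ← EReal.coe_add, sub_eq_add_neg]
  obtain ⟨x, hxz, hxmin⟩ := LowerSemicontinuous.exists_ekeland_point (g := g)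
    (hf.add_real ℓ.continuous.neg) hb (z := z) (hgz ▸ EReal.coe_ne_top _) hκ
  rw [hgz] at hxz
  have hfx_top : f x ≠ ⊤ := fun h => by
    simp only [g, h, EReal.top_add_coe, top_le_iff, EReal.coe_ne_top] at hxz
  have hfx_bot : f x ≠ ⊥ := fun h => by
    have := hb x
    simp only [g, h, EReal.bot_add, le_bot_iff] at this
    exact EReal.coe_ne_bot _ this
  set a := (f x).toReal
  have ha : f x = a := (EReal.coe_toReal hfx_top hfx_bot).symm
  have hgx : g x = (a - ℓ x : ℝ) := by simp only [g, ha, ← EReal.coe_add, sub_eq_add_neg]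
  refine ⟨x, a, ha, ?_, fun y => ?_⟩
  · rw [hgx, ← EReal.coe_add, EReal.coe_le_coe_iff, dist_eq_norm] at hxz
    rw [map_sub]
    linarith
  · have h := hxmin y
    rw [hgx, add_assoc, ← EReal.coe_add, EReal.coe_le_add_coe_iff, dist_eq_norm] at h
    convert h using 2
    rw [map_sub]
    ring

theorem exists_hasSubgradientAt_near [CompleteSpace X] (hE : Convex ℝ (realEpigraph f))
    (hf : LowerSemicontinuous f) {z : X} {c : ℝ} (hz : f z = c) {ε μ : ℝ} (hε : 0 < ε)
    (hμ : 0 < μ) :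
    ∃ x x', HasSubgradientAt f x' x ∧ ‖x - z‖ ≤ μ ∧ f x ≤ f z ∧ x' (x - z) ≤ 2 * ε := by
  obtain ⟨ℓ, hℓ⟩ := exists_eps_subgradient hE hf hz hε
  -- `κ ≥ ε / μ` keeps `x` within `μ` of `z`, and `κ ≥ ‖ℓ‖` makes `f x ≤ f z`.
  set κ := max (ε / μ) ‖ℓ‖
  have hκ : 0 < κ := lt_max_of_lt_left (div_pos hε hμ)
  obtain ⟨x, a, ha, hxz, hle⟩ := exists_cone_le_of_eps_subgradient hf hz hℓ hκ
  obtain ⟨x', hx', hx'ℓ⟩ := exists_hasSubgradientAt_norm_sub_le hE ha hκ.le hle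
  have hdist : κ * ‖x - z‖ ≤ ε := by
    linarith [EReal.coe_le_coe_iff.1 (ha ▸ hℓ x)]
  have hℓxz : ℓ (x - z) ≤ κ * ‖x - z‖ :=
    (le_abs_self _).trans (ℓ.le_of_opNorm_le (le_max_right _ _) _)
  refine ⟨x, x', hx', ?_, ?_, ?_⟩
  · have : ε / μ * ‖x - z‖ ≤ ε :=
      (mul_le_mul_of_nonneg_right (le_max_left _ _) (norm_nonneg _)).trans hdist
    rw [div_mul_eq_mul_div, div_le_iff₀ hμ] at this
    exact le_of_mul_le_mul_left this hε
  · rw [ha, hz, EReal.coe_le_coe_iff]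
    linarith
  · have := (le_abs_self _).trans ((x' - ℓ).le_of_opNorm_le hx'ℓ (x - z))
    rw [sub_apply] at this
    linarith

theorem HasSubgradientAt.one_sub_mul_apply_sub_le {x' : X →L[ℝ] ℝ} {x xbar u : X} {a S t : ℝ}
    (h : HasSubgradientAt f x' x) (hx : f x = a) (hS : f (xbar + u) = S) (ht : 0 ≤ t) :
    (1 - t) * x' (x - xbar) ≤ x' (x - (xbar + t • u)) + t * (S - a) := by
  have := h (xbar + u)
  rw [hx, hS, ← EReal.coe_add, EReal.coe_le_coe_iff] at this
  simp only [map_sub, map_add, map_smul, smul_eq_mul] at this ⊢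
  nlinarith

theorem exists_hasSubgradientAt_near_ray [CompleteSpace X]
    (hconv : ∀ x y : X, ∀ t : ℝ, 0 ≤ t → t ≤ 1 →
      f ((1 - t) • x + t • y) ≤ (((1 - t : ℝ)) : EReal) * f x + ((t : ℝ) : EReal) * f y)
    (hf : LowerSemicontinuous f) (hbot : ∀ y, f y ≠ ⊥) {xbar u : X} {r S : ℝ}
    (hr : f xbar = r) (hS : f (xbar + u) = S) {t : ℝ} (ht₀ : 0 < t) (ht₁ : t ≤ 1) :
    ∃ x x', ∃ a : ℝ, HasSubgradientAt f x' x ∧ f x = a ∧ ‖x - (xbar + t • u)‖ ≤ t * t ∧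
      a ≤ (1 - t) * r + t * S ∧ (1 - t) * x' (x - xbar) ≤ t * (2 + S - a) := by
  have hz : f (xbar + t • u) ≤ ((1 - t) * r + t * S : ℝ) := by
    convert hconv xbar (xbar + u) t ht₀.le ht₁ using 1
    · rw [smul_add, ← add_assoc, ← add_smul, sub_add_cancel, one_smul]
    · rw [hr, hS]
      norm_cast
  have hz_top := ne_top_of_le_ne_top (EReal.coe_ne_top _) hz
  obtain ⟨x, x', hx', hnear, hle, hpair⟩ := exists_hasSubgradientAt_near
    (convex_realEpigraph hconv) hf (EReal.coe_toReal hz_top (hbot _)).symm ht₀ (mul_pos ht₀ ht₀)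
  have ha := (EReal.coe_toReal (ne_top_of_le_ne_top hz_top hle) (hbot x)).symm
  refine ⟨x, x', _, hx', ha, hnear, EReal.coe_le_coe_iff.1 (ha ▸ hle.trans hz), ?_⟩
  linarith [hx'.one_sub_mul_apply_sub_le ha hS ht₀.le]

theorem tendsto_inv_smul_sub_of_norm_le {ι : Type*} {l : Filter ι} {t δ : ι → ℝ} {x : ι → X}
    {xbar u : X} (ht : ∀ i, 0 < t i) (hx : ∀ i, ‖x i - (xbar + t i • u)‖ ≤ t i * δ i)
    (hδ : Tendsto δ l (𝓝 0)) : Tendsto (fun i => (t i)⁻¹ • (x i - xbar)) l (𝓝 u) := by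
  rw [tendsto_iff_norm_sub_tendsto_zero]
  refine squeeze_zero (fun _ => norm_nonneg _) (fun i => ?_) hδ
  rw [← inv_smul_smul₀ (ht i).ne' u, ← smul_sub, norm_smul, norm_inv,
    Real.norm_of_nonneg (ht i).le, inv_mul_le_iff₀ (ht i), sub_sub]
  exact hx i

end Subgradient

theorem directional_density_convex_subdifferential {X : Type*} [NormedAddCommGroup X]
    [NormedSpace ℝ X] [CompleteSpace X]
    (f : X → EReal) (hf : LowerSemicontinuous f) (hbot : ∀ y, f y ≠ ⊥)
    (hconv : ∀ x y : X, ∀ t : ℝ, 0 ≤ t → t ≤ 1 →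
      f ((1 - t) • x + t • y) ≤ (((1 - t : ℝ)) : EReal) * f x + ((t : ℝ) : EReal) * f y)
    (xbar : X) (hxbar : f xbar ≠ ⊤) (u : X) (hu : f (xbar + u) ≠ ⊤) :
    ∃ xn : ℕ → X, ∃ xsn : ℕ → (X →L[ℝ] ℝ),
      (∀ n, ∀ y : X, ((xsn n (y - xn n) : ℝ) : EReal) + f (xn n) ≤ f y) ∧
      (∃ t : ℕ → ℝ, ∃ vn : ℕ → X, (∀ n, 0 < t n) ∧
        Filter.Tendsto t Filter.atTop (𝓝 (0:ℝ)) ∧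
        Filter.Tendsto vn Filter.atTop (𝓝 u) ∧
        ∀ n, xn n = xbar + t n • vn n) ∧
      Filter.Tendsto (fun n => f (xn n)) Filter.atTop (𝓝 (f xbar)) ∧
      Filter.limsup (fun n => ((xsn n (xn n - xbar) : ℝ) : EReal)) Filter.atTop ≤ 0 := by
  obtain ⟨r, hr⟩ : ∃ r : ℝ, f xbar = r := ⟨_, (EReal.coe_toReal hxbar (hbot xbar)).symm⟩
  obtain ⟨S, hS⟩ : ∃ S : ℝ, f (xbar + u) = S := ⟨_, (EReal.coe_toReal hu (hbot _)).symm⟩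
  obtain ⟨t, -, ht, ht0⟩ := exists_seq_strictAnti_tendsto' (zero_lt_one' ℝ)
  choose x x' a hsub ha hnear hle hpair using fun n =>
    exists_hasSubgradientAt_near_ray hconv hf hbot hr hS (ht n).1 (ht n).2.le
  set v := fun n => (t n)⁻¹ • (x n - xbar)
  have hv : Tendsto v atTop (𝓝 u) := tendsto_inv_smul_sub_of_norm_le (fun n => (ht n).1) hnear ht0
  have hxv : ∀ n, x n = xbar + t n • v n := fun n => by
    rw [smul_inv_smul₀ (ht n).1.ne', add_sub_cancel]
  have hx : Tendsto x atTop (𝓝 xbar) := by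
    simpa only [zero_smul, add_zero, ← hxv] using
      tendsto_const_nhds (x := xbar) |>.add (ht0.smul hv)
  have hbound : Tendsto (fun n => (1 - t n) * r + t n * S) atTop (𝓝 r) := by
    simpa using ((tendsto_const_nhds (x := (1 : ℝ)).sub ht0).mul_const r).add (ht0.mul_const S)
  have hfx : Tendsto (fun n => f (x n)) atTop (𝓝 (f xbar)) :=
    LowerSemicontinuousAt.tendsto_of_le (hf xbar) hx
      (hr ▸ continuous_coe_real_ereal.tendsto r |>.comp hbound)
      (.of_forall fun n => (ha n).trans_le (EReal.coe_le_coe_iff.2 (hle n)))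
  have ha_lim : Tendsto a atTop (𝓝 r) := EReal.tendsto_coe.1 (by simpa only [ha, hr] using hfx)
  refine ⟨x, x', hsub, ⟨t, v, fun n => (ht n).1, ht0, hv, hxv⟩, hfx, ?_⟩
  exact limsup_coe_le_zero_of_one_sub_mul_le (fun n => (ht n).2) ht0
    (tendsto_const_nhds (x := 2 + S) |>.sub ha_lim) hpair
end

section
/- Step inequality from the duality formula proof: let X be a normed space, f : X → (-∞,+∞] lsc, x̄ ∈ dom f, u, v ∈ X, α ≥ 0, and λ ∈ ℝ. If there exists δ > 0 such that f^d(x; u + α(x̄ − x)) < λ for all x ∈ D(x̄, v, δ), and if the subderivative link f^↑(z;w) ≤ sup_{ε>0} limsup_{x→z} inf_{w'∈B(w,ε)} f^d(x;w') holds at every point, then f^↑(z; u + α(x̄ − z)) ≤ λ for all z ∈ D(x̄, v, δ/2). Consequently limsup_{x→_v x̄} f^↑(x; u+α(x̄−x)) ≤ limsup_{x→_v x̄} f^d(x; u+α(x̄−x)). -/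
open Filter Topology

/-- Dini–Hadamard directional subderivative `f^d(x;u)`. -/
noncomputable def dirSub {X : Type*} [NormedAddCommGroup X] [NormedSpace ℝ X]
    (f : X → EReal) (x u : X) : EReal :=
  Filter.liminf (fun p : ℝ × X => ((p.1⁻¹ : ℝ) : EReal) * (f (x + p.1 • p.2) - f x))
    ((𝓝[>] (0:ℝ)) ×ˢ (𝓝 u))

/-- Clarke–Rockafellar subderivative `f^↑(z;w)`. -/
noncomputable def clarkeRock {X : Type*} [NormedAddCommGroup X] [NormedSpace ℝ X]
    (f : X → EReal) (z w : X) : EReal :=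
  ⨆ d : {d : ℝ // 0 < d},
    Filter.limsup (fun p : ℝ × X =>
        ⨅ w' : Metric.ball w (d : ℝ),
          ((p.1⁻¹ : ℝ) : EReal) * (f (p.2 + p.1 • (w' : X)) - f p.2))
      ((𝓝[>] (0:ℝ)) ×ˢ ((𝓝 z) ⊓ Filter.comap f (𝓝 (f z))))

/-!
Treiman's inequality bounds `f^↑(z; w)` by values of `f^d(x; w')` at points `x` near `z` and
directions `w'` near `w`. The drop `D(x̄, v, δ)` is open and the direction field
`x ↦ u + α (x̄ - x)` is continuous, so for `z` in the drop every such pair `(x, w')` can be taken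
of the form `(x, u + α (x̄ - x))` with `x` again in the drop, where `f^d < λ` by hypothesis.
Since the drops form a basis of `x →_v x̄`, the same argument compares the two limsups.
-/

section

variable {X : Type*} [NormedAddCommGroup X] [NormedSpace ℝ X]

lemma drop_mono (xbar v : X) {ε ε' : ℝ} (h : ε ≤ ε') : drop xbar v ε ⊆ drop xbar v ε' := by
  rintro y ⟨t, v', ht, htε, hv', rfl⟩
  exact ⟨t, v', ht, htε.trans_le h, hv'.trans_le h, rfl⟩

lemma drop_eq_biUnion_preimage (xbar v : X) (ε : ℝ) :
    drop xbar v ε = ⋃ t ∈ Set.Ioo 0 ε, (fun y => t⁻¹ • (y - xbar)) ⁻¹' Metric.ball v ε := by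
  ext y
  simp only [drop, Set.mem_iUnion, Set.mem_Ioo, Set.mem_preimage,
    Metric.mem_ball, dist_eq_norm, exists_prop]
  constructor
  · rintro ⟨t, v', ht, htε, hv', rfl⟩
    refine ⟨t, ⟨ht, htε⟩, ?_⟩
    rwa [add_sub_cancel_left, inv_smul_smul₀ ht.ne']
  · rintro ⟨t, ⟨ht, htε⟩, hy⟩
    exact ⟨t, _, ht, htε, hy, by rw [smul_inv_smul₀ ht.ne', add_sub_cancel]⟩

lemma isOpen_drop (xbar v : X) (ε : ℝ) : IsOpen (drop xbar v ε) := by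
  rw [drop_eq_biUnion_preimage]
  exact isOpen_biUnion fun t _ => Metric.isOpen_ball.preimage (by fun_prop)

lemma dirFilter_hasBasis (xbar v : X) :
    (dirFilter xbar v).HasBasis (fun ε : ℝ => 0 < ε) (drop xbar v) := by
  rw [dirFilter, iInf_subtype]
  refine Filter.hasBasis_biInf_principal' (fun a ha b hb => ?_) ⟨1, one_pos⟩
  exact ⟨min a b, lt_min ha hb, drop_mono xbar v (min_le_left a b),
    drop_mono xbar v (min_le_right a b)⟩

lemma clarkeRock_le_of_forall_dirSub_le {f : X → EReal}
    (hTreiman : ∀ z w : X, clarkeRock f z w ≤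
      ⨆ ε : {e : ℝ // 0 < e},
        Filter.limsup (fun x => ⨅ w' : Metric.ball w (ε : ℝ), dirSub f x (w' : X)) (𝓝 z))
    {U : Set X} (hU : IsOpen U) {g : X → X} (hg : ContinuousOn g U) {c : EReal}
    (hc : ∀ x ∈ U, dirSub f x (g x) ≤ c) :
    ∀ z ∈ U, clarkeRock f z (g z) ≤ c := by
  intro z hz
  refine (hTreiman z (g z)).trans (iSup_le fun ε => Filter.limsup_le_of_le ?_ ?_)
  · isBoundedDefault
  have hgz := (hg.continuousAt (hU.mem_nhds hz)).eventually (Metric.ball_mem_nhds (g z) ε.2)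
  filter_upwards [hU.mem_nhds hz, hgz] with x hxU hgx
  exact (iInf_le (fun w' : Metric.ball (g z) (ε : ℝ) => dirSub f x w') ⟨g x, hgx⟩).trans
    (hc x hxU)

end

theorem duality_formula_step_general {X : Type*} [NormedAddCommGroup X] [NormedSpace ℝ X]
    (f : X → EReal) (xbar : X) (u v : X) (α : ℝ) (lam : ℝ)
    (hTreiman : ∀ z w : X, clarkeRock f z w ≤
      ⨆ ε : {e : ℝ // 0 < e},
        Filter.limsup (fun x => ⨅ w' : Metric.ball w (ε : ℝ), dirSub f x (w' : X)) (𝓝 z))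
    (δ : ℝ) (hδ : 0 < δ)
    (hbound : ∀ x ∈ drop xbar v δ, dirSub f x (u + α • (xbar - x)) < (lam : EReal)) :
    (∀ z ∈ drop xbar v (δ / 2), clarkeRock f z (u + α • (xbar - z)) ≤ (lam : EReal)) ∧
    Filter.limsup (fun x => clarkeRock f x (u + α • (xbar - x))) (dirFilter xbar v) ≤
      Filter.limsup (fun x => dirSub f x (u + α • (xbar - x))) (dirFilter xbar v) := by
  have hg : Continuous fun x : X => u + α • (xbar - x) := by fun_prop
  have step : ∀ {ε : ℝ} {c : EReal},
      (∀ x ∈ drop xbar v ε, dirSub f x (u + α • (xbar - x)) < c) →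
      ∀ z ∈ drop xbar v ε, clarkeRock f z (u + α • (xbar - z)) ≤ c := fun h =>
    clarkeRock_le_of_forall_dirSub_le hTreiman (isOpen_drop xbar v _) hg.continuousOn
      fun x hx => (h x hx).le
  refine ⟨fun z hz => step hbound z (drop_mono xbar v (by linarith) hz), ?_⟩
  refine le_of_forall_gt_imp_ge_of_dense fun c hc => Filter.limsup_le_of_le ?_ ?_
  · isBoundedDefault
  obtain ⟨ε, hε, hdrop⟩ :=
    (dirFilter_hasBasis xbar v).mem_iff.1 (Filter.eventually_lt_of_limsup_lt hc)
  exact (dirFilter_hasBasis xbar v).mem_iff.2 ⟨ε, hε, step hdrop⟩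

theorem duality_formula_step {X : Type*} [NormedAddCommGroup X] [NormedSpace ℝ X]
    (f : X → EReal) (hf : LowerSemicontinuous f) (hbot : ∀ y, f y ≠ ⊥)
    (xbar : X) (hxbar : f xbar ≠ ⊤) (u v : X) (α : ℝ) (hα : 0 ≤ α) (lam : ℝ)
    (hTreiman : ∀ z w : X, clarkeRock f z w ≤
      ⨆ ε : {e : ℝ // 0 < e},
        Filter.limsup (fun x => ⨅ w' : Metric.ball w (ε : ℝ), dirSub f x (w' : X)) (𝓝 z))
    (δ : ℝ) (hδ : 0 < δ)
    (hbound : ∀ x ∈ drop xbar v δ, dirSub f x (u + α • (xbar - x)) < (lam : EReal)) :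
    (∀ z ∈ drop xbar v (δ / 2), clarkeRock f z (u + α • (xbar - z)) ≤ (lam : EReal)) ∧
    Filter.limsup (fun x => clarkeRock f x (u + α • (xbar - x))) (dirFilter xbar v) ≤
      Filter.limsup (fun x => dirSub f x (u + α • (xbar - x))) (dirFilter xbar v) :=
  duality_formula_step_general f xbar u v α lam hTreiman δ hδ hbound
end
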